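/- Let f : ℝ → ℂ be a continuous 2π-periodic function whose Fourier coefficients satisfy f̂(k) = 0 for all k ≥ 0. Then the zeroth Fourier coefficient of e^f equals 1: (1/(2π)) ∫₀^{2π} e^{f(θ)} dθ = 1. -/

import Mathlib

/-!
If `f̂(k) = 0` for all `k ≥ 0`, the same holds for every power `fⁿ` with `n ≥ 1`: by
Parseval, `(fg)^(k) = ∑ₘ f̂(k - m) ĝ(m)`, and for `k ≥ 0` every term has `m ≥ 0` or
`k - m > 0`. In particular every `fⁿ` with `n ≥ 1` has mean zero, so integrating the
exponential series of `e^f` termwise leaves only the constant term `1`.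
-/

noncomputable section

/-- The `k`-th Fourier coefficient `f̂(k) = (1/2π) ∫₀^{2π} f(θ) e^{-ikθ} dθ` of a
(`2π`-periodic) function `f : ℝ → ℂ`. -/
def fc (f : ℝ → ℂ) (k : ℤ) : ℂ :=
  (1 / (2 * (Real.pi : ℂ))) *
    ∫ θ in (0 : ℝ)..(2 * Real.pi), f θ * Complex.exp (-(Complex.I * (k : ℂ) * (θ : ℂ)))

open MeasureTheory AddCircle Nat
open scoped ComplexConjugate

instance : Fact (0 < 2 * Real.pi) := ⟨Real.two_pi_pos⟩

section ExpSeries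

variable {X : Type*} [TopologicalSpace X] [CompactSpace X] [MeasurableSpace X]
  [OpensMeasurableSpace X]

theorem integral_exp_eq_tsum (μ : Measure X) [IsFiniteMeasure μ] (F : C(X, ℂ)) :
    ∫ x, Complex.exp (F x) ∂μ = ∑' n : ℕ, (∫ x, F x ^ n ∂μ) / n ! := by
  have hint (n : ℕ) : Integrable (fun x => F x ^ n / n !) μ :=
    ((F.continuous.pow n).div_const _).integrable_of_hasCompactSupport
      (HasCompactSupport.of_compactSpace _)
  have hsum : Summable fun n : ℕ => ∫ x, ‖F x ^ n / (n ! : ℂ)‖ ∂μ := by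
    refine .of_nonneg_of_le (fun n => integral_nonneg fun x => norm_nonneg _) (fun n => ?_)
      ((Real.summable_pow_div_factorial ‖F‖).mul_left (μ.real Set.univ))
    calc ∫ x, ‖F x ^ n / (n ! : ℂ)‖ ∂μ ≤ ∫ _, ‖F‖ ^ n / n ! ∂μ := by
          refine integral_mono (hint n).norm (integrable_const _) fun x => ?_
          simp only [norm_div, norm_pow, Complex.norm_natCast]
          gcongr
          exact F.norm_coe_le_norm x
      _ = μ.real Set.univ * (‖F‖ ^ n / n !) := by rw [integral_const, smul_eq_mul]
  simp_rw [Complex.exp_eq_exp_ℂ, NormedSpace.exp_eq_tsum_div, ← integral_div]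
  exact (integral_tsum_of_summable_integral_norm hint hsum).symm

theorem integral_exp_eq_one_of_integral_pow_eq_zero (μ : Measure X) [IsProbabilityMeasure μ]
    (F : C(X, ℂ)) (hF : ∀ n ≠ 0, ∫ x, F x ^ n ∂μ = 0) :
    ∫ x, Complex.exp (F x) ∂μ = 1 := by
  rw [integral_exp_eq_tsum, tsum_eq_single 0 fun n hn => by rw [hF n hn, zero_div]]
  simp

end ExpSeries

namespace AddCircle

variable {T : ℝ} [Fact (0 < T)]

theorem fourierCoeff_conj (f : AddCircle T → ℂ) (n : ℤ) :
    fourierCoeff (fun t => conj (f t)) n = conj (fourierCoeff f (-n)) := by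
  simp only [fourierCoeff, ← integral_conj, smul_eq_mul, map_mul, fourier_neg, neg_neg]

theorem fourierCoeff_fourier_mul (f : AddCircle T → ℂ) (m n : ℤ) :
    fourierCoeff (fun t => fourier m t * f t) n = fourierCoeff f (n - m) := by
  rw [fourierCoeff, fourierCoeff, neg_sub, sub_eq_neg_add]
  simp only [smul_eq_mul, ← mul_assoc, ← fourier_add]

theorem fourierCoeff_zero_eq_integral (f : AddCircle T → ℂ) :
    fourierCoeff f 0 = ∫ t, f t ∂haarAddCircle := by
  simp [fourierCoeff]

theorem inner_fourierBasis_toLp (f : C(AddCircle T, ℂ)) (n : ℤ) :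
    inner ℂ (fourierBasis n) (ContinuousMap.toLp (E := ℂ) 2 haarAddCircle ℂ f) =
      fourierCoeff f n := by
  rw [← HilbertBasis.repr_apply_apply, fourierBasis_repr, fourierCoeff_toLp]

theorem integral_conj_mul_eq_tsum_fourierCoeff (f g : C(AddCircle T, ℂ)) :
    ∫ t, conj (f t) * g t ∂haarAddCircle
      = ∑' n : ℤ, conj (fourierCoeff f n) * fourierCoeff g n := by
  have hinner : inner ℂ (ContinuousMap.toLp (E := ℂ) 2 haarAddCircle ℂ f)
      (ContinuousMap.toLp (E := ℂ) 2 haarAddCircle ℂ g) =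
        ∫ t, conj (f t) * g t ∂haarAddCircle := by
    rw [ContinuousMap.inner_toLp]
    simp_rw [mul_comm]
  rw [← hinner, ← fourierBasis.tsum_inner_mul_inner]
  simp only [← inner_conj_symm _ (fourierBasis _), inner_fourierBasis_toLp]

theorem fourierCoeff_mul_eq_tsum (f g : C(AddCircle T, ℂ)) (n : ℤ) :
    fourierCoeff ⇑(f * g) n = ∑' m : ℤ, fourierCoeff f (n - m) * fourierCoeff g m := by
  set h : C(AddCircle T, ℂ) := star (fourier (-n) * f)
  have h_apply : ⇑h = fun t => conj (fourier (-n) t * f t) := by ext t; simp [h]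
  have hcoeff (m : ℤ) : conj (fourierCoeff h m) = fourierCoeff f (n - m) := by
    rw [h_apply, fourierCoeff_conj, fourierCoeff_fourier_mul, Complex.conj_conj, neg_sub_neg]
  calc fourierCoeff ⇑(f * g) n = ∫ t, conj (h t) * g t ∂haarAddCircle := by
        simp only [fourierCoeff, h_apply, Complex.conj_conj, smul_eq_mul,
          ContinuousMap.mul_apply, mul_assoc]
    _ = ∑' m : ℤ, fourierCoeff f (n - m) * fourierCoeff g m := by
        simp only [integral_conj_mul_eq_tsum_fourierCoeff, hcoeff]

theorem fourierCoeff_mul_eq_zero_of_nonneg {f g : C(AddCircle T, ℂ)}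
    (hf : ∀ n, 0 ≤ n → fourierCoeff f n = 0) (hg : ∀ n, 0 ≤ n → fourierCoeff g n = 0)
    (n : ℤ) (hn : 0 ≤ n) : fourierCoeff ⇑(f * g) n = 0 := by
  rw [fourierCoeff_mul_eq_tsum]
  refine (tsum_congr fun m => ?_).trans tsum_zero
  rcases le_or_gt 0 m with hm | hm
  · rw [hg m hm, mul_zero]
  · rw [hf (n - m) (by omega), zero_mul]

theorem fourierCoeff_pow_eq_zero_of_nonneg {f : C(AddCircle T, ℂ)}
    (hf : ∀ n, 0 ≤ n → fourierCoeff f n = 0) {k : ℕ} (hk : k ≠ 0) :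
    ∀ n, 0 ≤ n → fourierCoeff ⇑(f ^ k) n = 0 := by
  obtain ⟨k, rfl⟩ := Nat.exists_eq_add_one_of_ne_zero hk
  induction k with
  | zero => simpa using hf
  | succ k ih => rw [pow_succ]; exact fourierCoeff_mul_eq_zero_of_nonneg (ih k.succ_ne_zero) hf

end AddCircle

theorem fc_eq_fourierCoeff (g : AddCircle (2 * Real.pi) → ℂ) (k : ℤ) :
    fc (fun θ => g θ) k = fourierCoeff g k := by
  rw [fourierCoeff_eq_intervalIntegral _ k 0, zero_add, fc, Complex.real_smul]
  congr 1
  · push_cast; ring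
  refine intervalIntegral.integral_congr fun θ _ => ?_
  rw [smul_eq_mul, mul_comm, fourier_coe_apply]
  congr 2
  field_simp
  push_cast
  ring

theorem fc_zero (f : ℝ → ℂ) :
    fc f 0 = (1 / (2 * (Real.pi : ℂ))) * ∫ θ in (0 : ℝ)..(2 * Real.pi), f θ := by
  simp [fc]

theorem stmt_13 (f : ℝ → ℂ) (hf : Continuous f)
    (hper : ∀ θ, f (θ + 2 * Real.pi) = f θ)
    (hcoef : ∀ k : ℤ, 0 ≤ k → fc f k = 0) :
    (1 / (2 * (Real.pi : ℂ))) * ∫ θ in (0 : ℝ)..(2 * Real.pi), Complex.exp (f θ)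
      = 1 := by
  let F : C(AddCircle (2 * Real.pi), ℂ) :=
    ⟨Function.Periodic.lift hper, continuous_coinduced_dom.mpr hf⟩
  have hF (k : ℤ) (hk : 0 ≤ k) : fourierCoeff F k = 0 := by
    rw [← fc_eq_fourierCoeff]
    exact hcoef k hk
  have hFpow (n : ℕ) (hn : n ≠ 0) : ∫ t, F t ^ n ∂haarAddCircle = 0 := by
    simpa [fourierCoeff_zero_eq_integral] using fourierCoeff_pow_eq_zero_of_nonneg hF hn 0 le_rfl
  rw [← fc_zero, ← integral_exp_eq_one_of_integral_pow_eq_zero haarAddCircle F hFpow,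
    ← fourierCoeff_zero_eq_integral, ← fc_eq_fourierCoeff]
  rfl

end
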